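/- Let B be the six-element linearly ordered L₀-structure B = {a₁ < a₂ < a₃ < a₄ < b₁ < b₂} in which all six elements lie in pairwise distinct E₁-classes, the pairs {a₁, a₂} and {b₁, b₂} are E₂-equivalent, all other pairs of distinct two-element subsets are E₂-inequivalent, and for each k ∈ {3, 4, 5} all k-element subsets are E_k-equivalent. Let A be the ordered substructure of B on {a₁, a₂, a₃, a₄} (isomorphic to the ordered substructure on {a₃, a₄, b₁, b₂}). Then for every finite linearly ordered L₀-structure C whose L₀-reduct is in K₀ and which contains a copy of B, there exists a 2-coloring of the set of substructures of C isomorphic to A such that no substructure of C isomorphic to B has all of its substructures isomorphic to A of the same color; hence C ↛ (B)^A_2. -/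
import Mathlib


open FirstOrder Language Structure CategoryTheory

/-- The language `L₀` with a `2n`-ary relation symbol `E_n` for each `n ≥ 1`. -/
def L₀ : FirstOrder.Language where
  Functions := fun _ => Empty
  Relations := fun k => {n : ℕ // 0 < n ∧ k = n + n}

/-- The relation symbol `E_n`. -/
def Esymb (n : ℕ) (hn : 0 < n) : L₀.Relations (n + n) := ⟨n, hn, rfl⟩

/-- `E_n(x̄, ȳ)` in an `L₀`-structure. -/
def ERel (M : Type*) [L₀.Structure M] (n : ℕ) (hn : 0 < n) (x y : Fin n → M) : Prop :=
  Structure.RelMap (Esymb n hn) (Fin.append x y)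

/-- The defining conditions for membership in `K₀`: each `E_n` holds only on pairs of
injective `n`-tuples, is invariant under permuting the entries of each tuple separately,
and induces an equivalence relation on `n`-element subsets. -/
def IsK0Struct (C : Type*) [L₀.Structure C] : Prop :=
  ∀ (n : ℕ) (hn : 0 < n),
    (∀ x y : Fin n → C, ERel C n hn x y → Function.Injective x ∧ Function.Injective y) ∧
    (∀ (x y : Fin n → C) (σ τ : Equiv.Perm (Fin n)),
        ERel C n hn x y → ERel C n hn (x ∘ σ) (y ∘ τ)) ∧
    (∀ x : Fin n → C, Function.Injective x → ERel C n hn x x) ∧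
    (∀ x y : Fin n → C, ERel C n hn x y → ERel C n hn y x) ∧
    (∀ x y z : Fin n → C, ERel C n hn x y → ERel C n hn y z → ERel C n hn x z)

/-- The class `K₀` of finite `L₀`-structures as above. -/
def K₀ : Set (Bundled L₀.Structure) := {C | Finite C ∧ IsK0Struct C}

/-- A language with a single binary relation symbol (for a linear order). -/
def Lord : FirstOrder.Language where
  Functions := fun _ => Empty
  Relations := fun k => PLift (k = 2)

/-- Interpret the binary relation symbol of `Lord` by a given relation `r`. -/
def ordStructure (M : Type*) (r : M → M → Prop) : Lord.Structure M where
  funMap := fun f => f.elim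
  RelMap := fun {k} R v => r (v (Fin.cast R.down.symm 0)) (v (Fin.cast R.down.symm 1))

/-- The language of `L₀` together with one extra binary relation symbol `<`. -/
abbrev L₀lt : FirstOrder.Language := L₀.sum Lord

/-- The expansion of an `L₀`-structure by the binary relation `r`. -/
def expStr (M : Type*) [L₀.Structure M] (r : M → M → Prop) : L₀lt.Structure M :=
  @Language.sumStructure L₀ Lord M _ (ordStructure M r)

/-- The Ramsey property for a class `K` of finite structures: for all `A, B ∈ K` and
`k ≥ 1` there is `C ∈ K` such that every `k`-coloring of the copies of `A` in `C` is
monochromatic on the copies of `A` inside some copy `B'` of `B` in `C`. -/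
def RamseyProperty {L : FirstOrder.Language} (K : Set (Bundled L.Structure)) : Prop :=
  ∀ A B : Bundled L.Structure, A ∈ K → B ∈ K → ∀ k : ℕ, 0 < k →
    ∃ C : Bundled L.Structure, C ∈ K ∧
      ∀ χ : {S : L.Substructure C // Nonempty (S ≃[L] A)} → Fin k,
        ∃ B' : L.Substructure C, Nonempty (B' ≃[L] B) ∧
          ∀ S T : {S : L.Substructure C // Nonempty (S ≃[L] A)},
            S.1 ≤ B' → T.1 ≤ B' → χ S = χ T

/-- `E_n(x̄, ȳ)` in an `L₀lt`-structure. -/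
def ERel' (C : Type*) [i : L₀lt.Structure C] (n : ℕ) (hn : 0 < n) (x y : Fin n → C) : Prop :=
  @Structure.RelMap L₀lt C i (n + n) (Sum.inl (Esymb n hn)) (Fin.append x y)

/-- The order relation of an `L₀lt`-structure. -/
def ltRel (C : Type*) [i : L₀lt.Structure C] (a b : C) : Prop :=
  @Structure.RelMap L₀lt C i 2 (Sum.inr ⟨rfl⟩) ![a, b]

/-- The `K₀`-conditions for the `{E_n}`-part of an `L₀lt`-structure. -/
def IsK0Struct' (C : Type*) [L₀lt.Structure C] : Prop :=
  ∀ (n : ℕ) (hn : 0 < n),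
    (∀ x y : Fin n → C, ERel' C n hn x y → Function.Injective x ∧ Function.Injective y) ∧
    (∀ (x y : Fin n → C) (σ τ : Equiv.Perm (Fin n)),
        ERel' C n hn x y → ERel' C n hn (x ∘ σ) (y ∘ τ)) ∧
    (∀ x : Fin n → C, Function.Injective x → ERel' C n hn x x) ∧
    (∀ x y : Fin n → C, ERel' C n hn x y → ERel' C n hn y x) ∧
    (∀ x y z : Fin n → C, ERel' C n hn x y → ERel' C n hn y z → ERel' C n hn x z)

section Helpers

open FirstOrder Language Structure

variable {M : Type*} [L₀lt.Structure M] {N : Type*} [L₀lt.Structure N]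

lemma comp_append' {α β' : Type*} {m n : ℕ} (g : α → β') (x : Fin m → α) (y : Fin n → α) :
    g ∘ Fin.append x y = Fin.append (g ∘ x) (g ∘ y) := by
  funext i
  refine Fin.addCases (fun j => ?_) (fun j => ?_) i <;>
    simp [Fin.append_left, Fin.append_right]

lemma erel'_map (f : M ↪[L₀lt] N) {n : ℕ} (hn : 0 < n) (x y : Fin n → M) :
    ERel' N n hn (f ∘ x) (f ∘ y) ↔ ERel' M n hn x y := by
  unfold ERel'
  rw [← comp_append']
  exact f.map_rel _ _

lemma pair_comp (f : M → N) (a b : M) : (![f a, f b] : Fin 2 → N) = f ∘ ![a, b] := by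
  funext i; fin_cases i <;> rfl

lemma ltrel_map (f : M ↪[L₀lt] N) (a b : M) :
    ltRel N (f a) (f b) ↔ ltRel M a b := by
  unfold ltRel
  rw [pair_comp f a b]
  exact f.map_rel _ _

/-- Substructure with a given carrier (the language is purely relational). -/
def relSub (s : Set M) : L₀lt.Substructure M where
  carrier := s
  fun_mem := by rintro n (f | f) x _ <;> exact f.elim

lemma closure_relSub (s : Set M) : Substructure.closure L₀lt s = relSub s :=
  le_antisymm ((Substructure.closure_le).2 (fun _ hx => hx))
    (fun _ hx => Substructure.subset_closure hx)

lemma mem_closure_rel {s : Set M} {x : M} : x ∈ Substructure.closure L₀lt s ↔ x ∈ s := by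
  rw [closure_relSub s]; exact Iff.rfl

lemma relMap_erel' {n : ℕ} (hn : 0 < n) (w : Fin (n + n) → M) :
    @Structure.RelMap L₀lt M _ (n + n) (Sum.inl (Esymb n hn)) w ↔
      ERel' M n hn (fun i => w (Fin.castAdd n i)) (fun i => w (Fin.natAdd n i)) := by
  unfold ERel'
  rw [Fin.append_castAdd_natAdd]

lemma range_pair (a b : M) : Set.range ![a, b] = {a, b} := by
  ext x; simp [Fin.exists_fin_two, or_comm]

lemma inj_pair {a b : M} (h : a ≠ b) : Function.Injective ![a, b] := by
  intro i j hij
  fin_cases i <;> fin_cases j <;> simp_all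

/-- Same-range injective tuples are `E_n`-related. -/
lemma erel'_of_range_eq (hK : IsK0Struct' M) {n : ℕ} (hn : 0 < n) {x y : Fin n → M}
    (hx : Function.Injective x) (hy : Function.Injective y)
    (h : Set.range x = Set.range y) : ERel' M n hn x y := by
  set τ : Equiv.Perm (Fin n) :=
    (Equiv.ofInjective x hx).trans ((Equiv.setCongr h).trans (Equiv.ofInjective y hy).symm)
  have hyτ : y ∘ τ = x := by
    funext k
    show y ((Equiv.ofInjective y hy).symm _) = x k
    rw [Equiv.apply_ofInjective_symm hy]
    rfl
  have h1 := (hK n hn).2.1 x x (Equiv.refl _) τ.symm ((hK n hn).2.2.1 x hx)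
  have h2 : x ∘ ⇑(Equiv.refl (Fin n)) = x := rfl
  rw [h2] at h1
  have h3 : x ∘ ⇑τ.symm = y := by
    rw [← hyτ]; funext k; simp
  rwa [h3] at h1

end Helpers

section Shift

open FirstOrder Language Structure

/-- The index permutation sending the first four indices to the last four. -/
def σf : Fin 6 → Fin 6 := ![2, 3, 4, 5, 0, 1]

lemma shift_emb (β : Type) [L₀lt.Structure β] (e : Fin 6 → β)
    (hbij : Function.Bijective e)
    (hK : IsK0Struct' β)
    (hlin : IsStrictTotalOrder β (ltRel β))
    (hord : ∀ i j : Fin 6, i < j → ltRel β (e i) (e j))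
    (hE1 : ∀ i j : Fin 6, i ≠ j → ¬ ERel' β 1 one_pos (fun _ => e i) (fun _ => e j))
    (hE2 : ERel' β 2 two_pos ![e 0, e 1] ![e 4, e 5])
    (hE2' : ∀ x y : Fin 2 → β, Function.Injective x → Function.Injective y →
        Set.range x ≠ Set.range y →
        ¬ (Set.range x = ({e 0, e 1} : Set β) ∧ Set.range y = ({e 4, e 5} : Set β)) →
        ¬ (Set.range x = ({e 4, e 5} : Set β) ∧ Set.range y = ({e 0, e 1} : Set β)) →
        ¬ ERel' β 2 two_pos x y)
    (hEk : ∀ (k : ℕ) (hk : 0 < k), k = 3 ∨ k = 4 ∨ k = 5 →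
        ∀ x y : Fin k → β, Function.Injective x → Function.Injective y → ERel' β k hk x y) :
    ∃ u : ↥(Substructure.closure L₀lt ({e 0, e 1, e 2, e 3} : Set β)) ↪[L₀lt] β,
      ∀ (a : ↥(Substructure.closure L₀lt ({e 0, e 1, e 2, e 3} : Set β)))
        (i : Fin 6), (a : β) = e i → (u a : β) = e (σf i) := by
  haveI := hlin
  obtain ⟨einv, hle, hre⟩ := Function.bijective_iff_has_inverse.1 hbij
  have ene : ∀ i j : Fin 6, i ≠ j → e i ≠ e j := fun i j h hh => h (hbij.1 hh)
  have hσinj : Function.Injective σf := by decide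
  have hσlt : ∀ i j : Fin 6, i < 4 → j < 4 → (σf i < σf j ↔ i < j) := by decide
  have hσnot : ∀ j : Fin 6, j < 4 → σf j ≠ 0 ∧ σf j ≠ 1 := by decide
  set A' := Substructure.closure L₀lt ({e 0, e 1, e 2, e 3} : Set β) with hA'
  have memA' : ∀ x : β, x ∈ A' ↔ (x = e 0 ∨ x = e 1 ∨ x = e 2 ∨ x = e 3) := by
    intro x; rw [hA', mem_closure_rel]; simp [Set.mem_insert_iff]
  set shift : β → β := fun b => e (σf (einv b)) with hshiftdef
  have hshift : ∀ i : Fin 6, shift (e i) = e (σf i) := fun i => by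
    simp only [hshiftdef, hle i]
  have hshiftinj : Function.Injective shift := by
    intro a b h
    have h2 := hσinj (hbij.1 h)
    rw [← hre a, ← hre b, h2]
  -- order characterization
  have hordIff : ∀ i j : Fin 6, ltRel β (e i) (e j) ↔ i < j := by
    intro i j
    constructor
    · intro h
      rcases lt_trichotomy i j with hij | rfl | hij
      · exact hij
      · exact absurd h (irrefl _)
      · exact absurd h (asymm (hord j i hij))
    · exact hord i j
  -- E_1 characterization
  have char1 : ∀ (hn : 0 < 1) (x y : Fin 1 → β), ERel' β 1 hn x y ↔ x = y := by
    intro hn x y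
    constructor
    · intro h
      by_contra hne
      have hxy : x 0 ≠ y 0 := by
        intro h0
        exact hne (funext fun i => by rw [Subsingleton.elim i 0]; exact h0)
      have hij : einv (x 0) ≠ einv (y 0) := by
        intro h0; exact hxy (by rw [← hre (x 0), ← hre (y 0), h0])
      apply hE1 (einv (x 0)) (einv (y 0)) hij
      have ex : (fun _ : Fin 1 => e (einv (x 0))) = x :=
        funext fun i => by rw [hre (x 0), Subsingleton.elim i 0]
      have ey : (fun _ : Fin 1 => e (einv (y 0))) = y :=
        funext fun i => by rw [hre (y 0), Subsingleton.elim i 0]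
      rw [ex, ey]
      exact h
    · rintro rfl
      exact (hK 1 hn).2.2.1 x (fun a b _ => Subsingleton.elim a b)
  -- E_2 characterization
  have char2 : ∀ (hn : 0 < 2) (x y : Fin 2 → β), ERel' β 2 hn x y ↔
      (Function.Injective x ∧ Function.Injective y ∧
        (Set.range x = Set.range y ∨
         (Set.range x = {e 0, e 1} ∧ Set.range y = {e 4, e 5}) ∨
         (Set.range x = {e 4, e 5} ∧ Set.range y = {e 0, e 1}))) := by
    intro hn x y
    constructor
    · intro h
      obtain ⟨hx, hy⟩ := (hK 2 hn).1 x y h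
      refine ⟨hx, hy, ?_⟩
      by_contra hbig
      exact hE2' x y hx hy (fun h1 => hbig (Or.inl h1))
        (fun h1 => hbig (Or.inr (Or.inl h1))) (fun h1 => hbig (Or.inr (Or.inr h1))) h
    · rintro ⟨hx, hy, h | ⟨h1, h2⟩ | ⟨h1, h2⟩⟩
      · exact erel'_of_range_eq hK hn hx hy h
      · have t1 : ERel' β 2 hn x ![e 0, e 1] :=
          erel'_of_range_eq hK hn hx (inj_pair (ene 0 1 (by decide)))
            (h1.trans (range_pair _ _).symm)
        have t2 : ERel' β 2 hn ![e 4, e 5] y :=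
          erel'_of_range_eq hK hn (inj_pair (ene 4 5 (by decide))) hy
            ((range_pair _ _).trans h2.symm)
        exact (hK 2 hn).2.2.2.2 _ _ _ ((hK 2 hn).2.2.2.2 _ _ _ t1 hE2) t2
      · apply (hK 2 hn).2.2.2.1
        have t1 : ERel' β 2 hn y ![e 0, e 1] :=
          erel'_of_range_eq hK hn hy (inj_pair (ene 0 1 (by decide)))
            (h2.trans (range_pair _ _).symm)
        have t2 : ERel' β 2 hn ![e 4, e 5] x :=
          erel'_of_range_eq hK hn (inj_pair (ene 4 5 (by decide))) hx
            ((range_pair _ _).trans h1.symm)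
        exact (hK 2 hn).2.2.2.2 _ _ _ ((hK 2 hn).2.2.2.2 _ _ _ t1 hE2) t2
  -- E_k characterization for k = 3, 4, 5
  have char345 : ∀ (n : ℕ) (hn : 0 < n), (n = 3 ∨ n = 4 ∨ n = 5) →
      ∀ x y : Fin n → β, ERel' β n hn x y ↔
        (Function.Injective x ∧ Function.Injective y) := by
    intro n hn h3 x y
    exact ⟨fun h => (hK n hn).1 x y h, fun h => hEk n hn h3 x y h.1 h.2⟩
  -- injectivity transfer
  have injIff : ∀ {m : ℕ} (K : Fin m → Fin 6),
      (Function.Injective (fun i => e (σf (K i))) ↔ Function.Injective (fun i => e (K i))) := by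
    intro m K
    constructor
    · intro h a b hab
      apply h
      show e (σf (K a)) = e (σf (K b))
      rw [hbij.1 hab]
    · intro h a b hab
      apply h
      show e (K a) = e (K b)
      rw [hσinj (hbij.1 hab)]
  -- range transfer
  have rangeIff : ∀ {m m' : ℕ} (K : Fin m → Fin 6) (K' : Fin m' → Fin 6),
      (Set.range (fun i => e (σf (K i))) = Set.range (fun i => e (σf (K' i))) ↔
        Set.range (fun i => e (K i)) = Set.range (fun i => e (K' i))) := by
    intro m m' K K'
    have h1 : ∀ {p : ℕ} (P : Fin p → Fin 6),
        Set.range (fun i => e (σf (P i))) = (e ∘ σf) '' Set.range P := by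
      intro p P
      rw [show (fun i => e (σf (P i))) = (e ∘ σf) ∘ P from rfl, Set.range_comp]
    have h2 : ∀ {p : ℕ} (P : Fin p → Fin 6),
        Set.range (fun i => e (P i)) = e '' Set.range P := by
      intro p P
      rw [show (fun i => e (P i)) = e ∘ P from rfl, Set.range_comp]
    rw [h1 K, h1 K', h2 K, h2 K']
    rw [Set.image_eq_image (Function.Injective.comp hbij.1 hσinj),
      Set.image_eq_image hbij.1]
  -- size bound
  have smallK : ∀ {m : ℕ} (K : Fin m → Fin 6) (T : Finset (Fin 6)), T.card = 4 →
      (∀ i, K i ∈ T) → Function.Injective K → m ≤ 4 := by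
    intro m K T hT hmem hKi
    have hi : Function.Injective (fun i => (⟨K i, hmem i⟩ : T)) := by
      intro a b h
      exact hKi (congrArg Subtype.val h)
    have := Fintype.card_le_of_injective _ hi
    simpa [hT] using this
  have mem4 : ∀ j : Fin 6, j < 4 → j ∈ ({0, 1, 2, 3} : Finset (Fin 6)) := by decide
  have memσ4 : ∀ j : Fin 6, j < 4 → σf j ∈ ({2, 3, 4, 5} : Finset (Fin 6)) := by decide
  -- membership of a range element
  have mem_range_pair : ∀ {m : ℕ} (x : Fin m → β) (a b : β),
      Set.range x = ({a, b} : Set β) → ∃ i, x i = a := by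
    intro m x a b h
    have : a ∈ Set.range x := by rw [h]; exact Set.mem_insert _ _
    exact this
  -- master transfer for all n
  have charAll : ∀ (n : ℕ) (hn : 0 < n) (K K' : Fin n → Fin 6),
      (∀ i, K i < 4) → (∀ i, K' i < 4) →
      (ERel' β n hn (fun i => e (σf (K i))) (fun i => e (σf (K' i))) ↔
        ERel' β n hn (fun i => e (K i)) (fun i => e (K' i))) := by
    intro n
    rcases n with _ | _ | _ | _ | _ | m
    · intro hn; exact absurd hn (lt_irrefl 0)
    · intro hn K K' h4 h4'
      rw [char1 hn, char1 hn]
      constructor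
      · intro h
        funext i
        have h0 := congrFun h i
        rw [hσinj (hbij.1 h0)]
      · intro h
        funext i
        have h0 := congrFun h i
        rw [hbij.1 h0]
    · intro hn K K' h4 h4'
      rw [char2 hn, char2 hn]
      have i1 := injIff K
      have i2 := injIff K'
      have r1 := rangeIff K K'
      constructor
      · rintro ⟨hx, hy, h | ⟨h1, h2⟩ | ⟨h1, h2⟩⟩
        · exact ⟨i1.1 hx, i2.1 hy, Or.inl (r1.1 h)⟩
        · obtain ⟨i, hi⟩ := mem_range_pair _ _ _ h1
          exact absurd (hbij.1 hi) (hσnot _ (h4 i)).1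
        · obtain ⟨i, hi⟩ := mem_range_pair _ _ _ h2
          exact absurd (hbij.1 hi) (hσnot _ (h4' i)).1
      · rintro ⟨hx, hy, h | ⟨h1, h2⟩ | ⟨h1, h2⟩⟩
        · exact ⟨i1.2 hx, i2.2 hy, Or.inl (r1.2 h)⟩
        · obtain ⟨i, hi⟩ := mem_range_pair _ _ _ h2
          have h5 := h4' i
          rw [hbij.1 hi] at h5
          exact absurd h5 (by decide)
        · obtain ⟨i, hi⟩ := mem_range_pair _ _ _ h1
          have h5 := h4 i
          rw [hbij.1 hi] at h5
          exact absurd h5 (by decide)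
    · intro hn K K' h4 h4'
      rw [char345 3 hn (by omega), char345 3 hn (by omega)]
      exact and_congr (injIff K) (injIff K')
    · intro hn K K' h4 h4'
      rw [char345 4 hn (by omega), char345 4 hn (by omega)]
      exact and_congr (injIff K) (injIff K')
    · intro hn K K' h4 h4'
      constructor <;> intro h <;> exfalso
      · have hinj := ((hK _ hn).1 _ _ h).1
        have hKinj : Function.Injective K := fun a b hab =>
          hinj (show e (σf (K a)) = e (σf (K b)) by rw [hab])
        have := smallK K ({0, 1, 2, 3} : Finset (Fin 6)) (by decide)
          (fun i => mem4 _ (h4 i)) hKinj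
        omega
      · have hinj := ((hK _ hn).1 _ _ h).1
        have hKinj : Function.Injective K := fun a b hab =>
          hinj (show e (K a) = e (K b) by rw [hab])
        have := smallK K ({0, 1, 2, 3} : Finset (Fin 6)) (by decide)
          (fun i => mem4 _ (h4 i)) hKinj
        omega
  refine ⟨⟨⟨fun a => shift (a : β), ?_⟩, ?_, ?_⟩, ?_⟩
  · intro a b h
    exact Subtype.ext (hshiftinj h)
  · intro n f x
    rcases f with f | f <;> exact f.elim
  · intro k r v
    have hv : ∀ i, ∃ j : Fin 6, j < 4 ∧ (v i : β) = e j := by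
      intro i
      rcases (memA' _).1 (v i).2 with h | h | h | h
      · exact ⟨0, by decide, h⟩
      · exact ⟨1, by decide, h⟩
      · exact ⟨2, by decide, h⟩
      · exact ⟨3, by decide, h⟩
    choose J hJlt hJe using hv
    rcases r with ⟨n, hn, hk⟩ | ⟨hk⟩
    · -- relation E_n
      subst hk
      show @Structure.RelMap L₀lt β _ (n + n) (Sum.inl ⟨n, hn, rfl⟩)
          ((fun a : ↥A' => shift (a : β)) ∘ v) ↔
        @Structure.RelMap L₀lt β _ (n + n) (Sum.inl ⟨n, hn, rfl⟩) (fun i => ((v i : β)))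
      have key : ∀ (w : Fin (n + n) → β),
          @Structure.RelMap L₀lt β _ (n + n) (Sum.inl ⟨n, hn, rfl⟩) w ↔
            ERel' β n hn (fun i => w (Fin.castAdd n i)) (fun i => w (Fin.natAdd n i)) :=
        relMap_erel' hn
      rw [key, key]
      have e1 : (fun i => ((fun a : ↥A' => shift (a : β)) ∘ v) (Fin.castAdd n i)) =
          (fun i => e (σf (J (Fin.castAdd n i)))) := by
        funext i; show shift _ = _; rw [hJe (Fin.castAdd n i), hshift]
      have e2 : (fun i => ((fun a : ↥A' => shift (a : β)) ∘ v) (Fin.natAdd n i)) =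
          (fun i => e (σf (J (Fin.natAdd n i)))) := by
        funext i; show shift _ = _; rw [hJe (Fin.natAdd n i), hshift]
      have e3 : (fun i => (fun i' => ((v i' : β))) (Fin.castAdd n i)) =
          (fun i => e (J (Fin.castAdd n i))) := by
        funext i; exact hJe _
      have e4 : (fun i => (fun i' => ((v i' : β))) (Fin.natAdd n i)) =
          (fun i => e (J (Fin.natAdd n i))) := by
        funext i; exact hJe _
      rw [e1, e2, e3, e4]
      exact charAll n hn _ _ (fun i => hJlt _) (fun i => hJlt _)
    · -- order relation
      have hk2 : k = 2 := hk.down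
      subst hk2
      show @Structure.RelMap L₀lt β _ 2 (Sum.inr ⟨rfl⟩)
          ((fun a : ↥A' => shift (a : β)) ∘ v) ↔
        @Structure.RelMap L₀lt β _ 2 (Sum.inr ⟨rfl⟩) (fun i => ((v i : β)))
      have g1 : ((fun a : ↥A' => shift (a : β)) ∘ v) = ![shift (v 0 : β), shift (v 1 : β)] := by
        funext i; fin_cases i <;> rfl
      have g2 : (fun i => ((v i : β))) = ![(v 0 : β), (v 1 : β)] := by
        funext i; fin_cases i <;> rfl
      rw [g1, g2]
      show ltRel β (shift (v 0 : β)) (shift (v 1 : β)) ↔ ltRel β (v 0 : β) (v 1 : β)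
      rw [hJe 0, hJe 1, hshift, hshift, hordIff, hordIff]
      exact hσlt _ _ (hJlt 0) (hJlt 1)
  · intro a i hai
    show shift (a : β) = e (σf i)
    rw [hai, hshift]

end Shift

/-- for the six-element linearly ordered `L₀`-structure `B` (with universe
`β`, enumerated by `e`) and its ordered substructure `A` on the first four elements, no
finite linearly ordered `L₀`-structure `C` with reduct in `K₀` containing a copy of `B`
satisfies `C → (B)^A_2`: there is a `2`-coloring of the copies of `A` in `C` such that no
copy of `B` in `C` is `A`-monochromatic. -/
theorem no_arrow_B_A_two (β : Type) [L₀lt.Structure β] (e : Fin 6 → β)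
    (hbij : Function.Bijective e)
    (hK : IsK0Struct' β)
    (hlin : IsStrictTotalOrder β (ltRel β))
    (hord : ∀ i j : Fin 6, i < j → ltRel β (e i) (e j))
    -- all six elements lie in pairwise distinct E₁-classes
    (hE1 : ∀ i j : Fin 6, i ≠ j → ¬ ERel' β 1 one_pos (fun _ => e i) (fun _ => e j))
    -- the pairs {a₁, a₂} and {b₁, b₂} are E₂-equivalent
    (hE2 : ERel' β 2 two_pos ![e 0, e 1] ![e 4, e 5])
    -- all other pairs of distinct two-element subsets are E₂-inequivalent
    (hE2' : ∀ x y : Fin 2 → β, Function.Injective x → Function.Injective y →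
        Set.range x ≠ Set.range y →
        ¬ (Set.range x = ({e 0, e 1} : Set β) ∧ Set.range y = ({e 4, e 5} : Set β)) →
        ¬ (Set.range x = ({e 4, e 5} : Set β) ∧ Set.range y = ({e 0, e 1} : Set β)) →
        ¬ ERel' β 2 two_pos x y)
    -- for k ∈ {3, 4, 5} all k-element subsets are E_k-equivalent
    (hEk : ∀ (k : ℕ) (hk : 0 < k), k = 3 ∨ k = 4 ∨ k = 5 →
        ∀ x y : Fin k → β, Function.Injective x → Function.Injective y → ERel' β k hk x y)
    (C : Type) [L₀lt.Structure C] [Finite C]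
    (hCK : IsK0Struct' C) (hClin : IsStrictTotalOrder C (ltRel C))
    (hBC : Nonempty (β ↪[L₀lt] C)) :
    ∃ χ : {S : L₀lt.Substructure C //
        Nonempty (S ≃[L₀lt] (Substructure.closure L₀lt ({e 0, e 1, e 2, e 3} : Set β)))} → Fin 2,
      ∀ B' : L₀lt.Substructure C, Nonempty (B' ≃[L₀lt] β) →
        ∃ S T : {S : L₀lt.Substructure C //
            Nonempty (S ≃[L₀lt] (Substructure.closure L₀lt ({e 0, e 1, e 2, e 3} : Set β)))},
          S.1 ≤ B' ∧ T.1 ≤ B' ∧ χ S ≠ χ T := by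

  classical
  haveI := hClin
  letI LO : LinearOrder C := linearOrderOfSTO (ltRel C)
  set A' := Substructure.closure L₀lt ({e 0, e 1, e 2, e 3} : Set β) with hA'
  have memA' : ∀ x : β, x ∈ A' ↔ (x = e 0 ∨ x = e 1 ∨ x = e 2 ∨ x = e 3) := by
    intro x; rw [hA', mem_closure_rel]; simp [Set.mem_insert_iff]
  set cls : C → C → Set (C × C) := fun a b => {p | ERel' C 2 two_pos ![a, b] ![p.1, p.2]}
    with hcls
  set χf : L₀lt.Substructure C → Fin 2 := fun S0 =>
    if h : (Set.toFinite ((S0 : Set C))).toFinset.card = 4 then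
      (if WellOrderingRel
          (cls ((Set.toFinite ((S0 : Set C))).toFinset.orderEmbOfFin h 0)
               ((Set.toFinite ((S0 : Set C))).toFinset.orderEmbOfFin h 1))
          (cls ((Set.toFinite ((S0 : Set C))).toFinset.orderEmbOfFin h 2)
               ((Set.toFinite ((S0 : Set C))).toFinset.orderEmbOfFin h 3))
        then 0 else 1)
    else 0 with hχf
  refine ⟨fun S => χf S.1, ?_⟩
  intro B' hB'
  obtain ⟨g⟩ := hB'
  set f : β ↪[L₀lt] C := B'.subtype.comp g.symm.toEmbedding with hf
  set d : Fin 6 → C := fun i => f (e i) with hd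
  have hdmem : ∀ i, d i ∈ B' := fun i => (g.symm (e i)).2
  have hdinj : Function.Injective d := fun a b h => hbij.1 (f.injective h)
  have hdne : ∀ i j : Fin 6, i ≠ j → d i ≠ d j := fun i j h hh => h (hdinj hh)
  have ene : ∀ i j : Fin 6, i ≠ j → e i ≠ e j := fun i j h hh => h (hbij.1 hh)
  have hdlt : ∀ i j : Fin 6, i < j → ltRel C (d i) (d j) := fun i j h =>
    (ltrel_map f (e i) (e j)).2 (hord i j h)
  set S1 := Substructure.closure L₀lt ({d 0, d 1, d 2, d 3} : Set C) with hS1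
  set S2 := Substructure.closure L₀lt ({d 2, d 3, d 4, d 5} : Set C) with hS2
  have memS1 : ∀ x : C, x ∈ S1 ↔ (x = d 0 ∨ x = d 1 ∨ x = d 2 ∨ x = d 3) := by
    intro x; rw [hS1, mem_closure_rel]; simp [Set.mem_insert_iff]
  have memS2 : ∀ x : C, x ∈ S2 ↔ (x = d 2 ∨ x = d 3 ∨ x = d 4 ∨ x = d 5) := by
    intro x; rw [hS2, mem_closure_rel]; simp [Set.mem_insert_iff]
  have hσv : σf 0 = 2 ∧ σf 1 = 3 ∧ σf 2 = 4 ∧ σf 3 = 5 := by decide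
  -- S1 is a copy of A'
  have iso1 : Nonempty (S1 ≃[L₀lt] A') := by
    set i1 : ↥A' ↪[L₀lt] C := f.comp A'.subtype with hi1
    have hrange : i1.toHom.range = S1 := by
      ext x
      rw [FirstOrder.Language.Hom.mem_range, memS1]
      constructor
      · rintro ⟨y, rfl⟩
        rcases (memA' _).1 y.2 with h | h | h | h
        · exact Or.inl (congrArg (fun z : β => f z) h)
        · exact Or.inr (Or.inl (congrArg (fun z : β => f z) h))
        · exact Or.inr (Or.inr (Or.inl (congrArg (fun z : β => f z) h)))
        · exact Or.inr (Or.inr (Or.inr (congrArg (fun z : β => f z) h)))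
      · rintro (rfl | rfl | rfl | rfl)
        · exact ⟨⟨e 0, (memA' _).2 (Or.inl rfl)⟩, rfl⟩
        · exact ⟨⟨e 1, (memA' _).2 (Or.inr (Or.inl rfl))⟩, rfl⟩
        · exact ⟨⟨e 2, (memA' _).2 (Or.inr (Or.inr (Or.inl rfl)))⟩, rfl⟩
        · exact ⟨⟨e 3, (memA' _).2 (Or.inr (Or.inr (Or.inr rfl)))⟩, rfl⟩
    rw [← hrange]
    exact ⟨i1.equivRange.symm⟩
  obtain ⟨uemb, huspec⟩ := shift_emb β e hbij hK hlin hord hE1 hE2 hE2' hEk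
  -- S2 is a copy of A'
  have iso2 : Nonempty (S2 ≃[L₀lt] A') := by
    set i2 : ↥A' ↪[L₀lt] C := f.comp uemb with hi2
    have hval : ∀ (y : ↥A') (i : Fin 6), (y : β) = e i → i2 y = f (e (σf i)) := by
      intro y i hy
      exact congrArg (fun z : β => f z) (huspec y i hy)
    have hrange : i2.toHom.range = S2 := by
      ext x
      rw [FirstOrder.Language.Hom.mem_range, memS2]
      constructor
      · rintro ⟨y, rfl⟩
        rcases (memA' _).1 y.2 with h | h | h | h
        · rw [show i2.toHom y = i2 y from rfl, hval y 0 h, hσv.1]; exact Or.inl rfl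
        · rw [show i2.toHom y = i2 y from rfl, hval y 1 h, hσv.2.1]; exact Or.inr (Or.inl rfl)
        · rw [show i2.toHom y = i2 y from rfl, hval y 2 h, hσv.2.2.1]
          exact Or.inr (Or.inr (Or.inl rfl))
        · rw [show i2.toHom y = i2 y from rfl, hval y 3 h, hσv.2.2.2]
          exact Or.inr (Or.inr (Or.inr rfl))
      · rintro (rfl | rfl | rfl | rfl)
        · exact ⟨⟨e 0, (memA' _).2 (Or.inl rfl)⟩, by rw [show i2.toHom _ = i2 _ from rfl,
            hval _ 0 rfl, hσv.1]⟩
        · exact ⟨⟨e 1, (memA' _).2 (Or.inr (Or.inl rfl))⟩, by rw [show i2.toHom _ = i2 _ from rfl,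
            hval _ 1 rfl, hσv.2.1]⟩
        · exact ⟨⟨e 2, (memA' _).2 (Or.inr (Or.inr (Or.inl rfl)))⟩, by
            rw [show i2.toHom _ = i2 _ from rfl, hval _ 2 rfl, hσv.2.2.1]⟩
        · exact ⟨⟨e 3, (memA' _).2 (Or.inr (Or.inr (Or.inr rfl)))⟩, by
            rw [show i2.toHom _ = i2 _ from rfl, hval _ 3 rfl, hσv.2.2.2]⟩
    rw [← hrange]
    exact ⟨i2.equivRange.symm⟩
  have hS1le : S1 ≤ B' := by
    rw [hS1, Substructure.closure_le]
    rintro x (rfl | rfl | rfl | rfl)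
    · exact hdmem 0
    · exact hdmem 1
    · exact hdmem 2
    · exact hdmem 3
  have hS2le : S2 ≤ B' := by
    rw [hS2, Substructure.closure_le]
    rintro x (rfl | rfl | rfl | rfl)
    · exact hdmem 2
    · exact hdmem 3
    · exact hdmem 4
    · exact hdmem 5
  -- computing the coloring on S1 and S2
  have compute : ∀ (S0 : L₀lt.Substructure C) (a : Fin 4 → Fin 6),
      StrictMono a → (∀ x : C, x ∈ S0 ↔ (x = d (a 0) ∨ x = d (a 1) ∨ x = d (a 2) ∨ x = d (a 3))) →
      χf S0 = if WellOrderingRel (cls (d (a 0)) (d (a 1))) (cls (d (a 2)) (d (a 3)))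
        then 0 else 1 := by
    intro S0 a ha hmem
    have hfin : (Set.toFinite ((S0 : Set C))).toFinset = {d (a 0), d (a 1), d (a 2), d (a 3)} := by
      ext x
      rw [Set.Finite.mem_toFinset, SetLike.mem_coe, hmem]
      simp
    have hane : ∀ i j : Fin 4, i ≠ j → d (a i) ≠ d (a j) := by
      intro i j hij
      exact hdne _ _ (fun h => hij (ha.injective h))
    have hcard : (Set.toFinite ((S0 : Set C))).toFinset.card = 4 := by
      rw [hfin]
      rw [Finset.card_insert_of_notMem (by
            simp [hane 0 1 (by decide), hane 0 2 (by decide), hane 0 3 (by decide)]),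
          Finset.card_insert_of_notMem (by
            simp [hane 1 2 (by decide), hane 1 3 (by decide)]),
          Finset.card_insert_of_notMem (by simp [hane 2 3 (by decide)]),
          Finset.card_singleton]
    have hmono : StrictMono (fun i : Fin 4 => d (a i)) := by
      intro i j hij
      exact hdlt _ _ (ha hij)
    have huniq : (fun i : Fin 4 => d (a i)) =
        (Set.toFinite ((S0 : Set C))).toFinset.orderEmbOfFin hcard := by
      apply Finset.orderEmbOfFin_unique hcard _ hmono
      intro i
      rw [hfin]
      fin_cases i <;> simp
    have hEv : ∀ i : Fin 4, (Set.toFinite ((S0 : Set C))).toFinset.orderEmbOfFin hcard i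
        = d (a i) := fun i => (congrFun huniq i).symm
    rw [hχf]
    simp only []
    rw [dif_pos hcard, hEv 0, hEv 1, hEv 2, hEv 3]
  -- the two pair-classes facts
  have hE2C : ERel' C 2 two_pos ![d 0, d 1] ![d 4, d 5] := by
    have h := (erel'_map f two_pos ![e 0, e 1] ![e 4, e 5]).2 hE2
    rw [← pair_comp f (e 0) (e 1), ← pair_comp f (e 4) (e 5)] at h
    exact h
  have hcls45 : cls (d 4) (d 5) = cls (d 0) (d 1) := by
    ext p
    rw [hcls]
    show ERel' C 2 two_pos ![d 4, d 5] ![p.1, p.2] ↔ ERel' C 2 two_pos ![d 0, d 1] ![p.1, p.2]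
    constructor
    · intro h
      exact (hCK 2 two_pos).2.2.2.2 _ _ _ hE2C h
    · intro h
      exact (hCK 2 two_pos).2.2.2.2 _ _ _ ((hCK 2 two_pos).2.2.2.1 _ _ hE2C) h
  have hclsne : cls (d 0) (d 1) ≠ cls (d 2) (d 3) := by
    intro hcc
    have refl23 : ERel' C 2 two_pos ![d 2, d 3] ![d 2, d 3] :=
      (hCK 2 two_pos).2.2.1 _ (inj_pair (hdne 2 3 (by decide)))
    have hmem23 : ((d 2, d 3) : C × C) ∈ cls (d 2) (d 3) := by
      rw [hcls]; exact refl23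
    rw [← hcc] at hmem23
    have h01 : ERel' C 2 two_pos ![d 0, d 1] ![d 2, d 3] := hmem23
    rw [show (![d 0, d 1] : Fin 2 → C) = f ∘ ![e 0, e 1] from pair_comp f (e 0) (e 1),
        show (![d 2, d 3] : Fin 2 → C) = f ∘ ![e 2, e 3] from pair_comp f (e 2) (e 3)] at h01
    have hβ := (erel'_map f two_pos ![e 0, e 1] ![e 2, e 3]).1 h01
    apply hE2' ![e 0, e 1] ![e 2, e 3] (inj_pair (ene 0 1 (by decide)))
      (inj_pair (ene 2 3 (by decide))) ?_ ?_ ?_ hβ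
    · rw [range_pair, range_pair]
      intro h
      have : e 0 ∈ ({e 2, e 3} : Set β) := h ▸ Set.mem_insert _ _
      rcases this with h0 | h0
      · exact ene 0 2 (by decide) h0
      · exact ene 0 3 (by decide) h0
    · rintro ⟨-, h2⟩
      rw [range_pair] at h2
      have : e 2 ∈ ({e 4, e 5} : Set β) := h2 ▸ Set.mem_insert _ _
      rcases this with h0 | h0
      · exact ene 2 4 (by decide) h0
      · exact ene 2 5 (by decide) h0
    · rintro ⟨h1, -⟩
      rw [range_pair] at h1
      have : e 0 ∈ ({e 4, e 5} : Set β) := h1 ▸ Set.mem_insert _ _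
      rcases this with h0 | h0
      · exact ene 0 4 (by decide) h0
      · exact ene 0 5 (by decide) h0
  -- conclusion
  refine ⟨⟨S1, iso1⟩, ⟨S2, iso2⟩, hS1le, hS2le, ?_⟩
  show χf S1 ≠ χf S2
  have hv1 : χf S1 = if WellOrderingRel (cls (d 0) (d 1)) (cls (d 2) (d 3)) then 0 else 1 := by
    have := compute S1 ![0, 1, 2, 3] (by intro i j hij; fin_cases i <;> fin_cases j <;>
      first | exact absurd hij (by decide) | decide) ?_
    · convert this using 3 <;> rfl
    · intro x; rw [memS1]; rfl
  have hv2 : χf S2 = if WellOrderingRel (cls (d 2) (d 3)) (cls (d 4) (d 5)) then 0 else 1 := by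
    have := compute S2 ![2, 3, 4, 5] (by intro i j hij; fin_cases i <;> fin_cases j <;>
      first | exact absurd hij (by decide) | decide) ?_
    · convert this using 3 <;> rfl
    · intro x; rw [memS2]; rfl
  rw [hv1, hv2, hcls45]
  by_cases hw : WellOrderingRel (cls (d 0) (d 1)) (cls (d 2) (d 3))
  · rw [if_pos hw, if_neg (asymm hw)]
    decide
  · have hw2 : WellOrderingRel (cls (d 2) (d 3)) (cls (d 0) (d 1)) := by
      rcases trichotomous_of WellOrderingRel (cls (d 0) (d 1)) (cls (d 2) (d 3)) with
        h | h | h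
      · exact absurd h hw
      · exact absurd h hclsne
      · exact h
    rw [if_neg hw, if_pos hw2]
    decide
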